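/- arXiv:2208.10121 — 5 statements merged into one kernel-verified Lean document; each statement's English description precedes it below -/
import Mathlib

section
/- Reachability games are positionally determined: for any (possibly infinite) game graph G with target set R for player i, there exist a positional winning strategy for player i with support W_i and a positional winning strategy for player 1−i with support V \ W_i, where W_i is the support of a maximal i-strategy. -/
/-!
The reaching player's winning region is the attractor of `R`, the least fixed point of
`X ↦ R ∪ CPre X`. Ranking its vertices by the ordinal stage at which they enter the transfinite
iteration, from every vertex outside `R` the player can move, and the opponent is forced to move,
to a vertex of smaller rank; by well-foundedness such plays must reach `R`. Being a fixed point,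
the attractor is avoided from outside by the opponent's choice and by every move of the reaching
player, so the opponent positionally keeps every play from its complement away from `R`. The same
escape argument confines the support of any winning strategy of the reaching player to the
attractor, which gives maximality.
-/

/-- A (finite or infinite) path in the graph with edge relation `E`:
`f k = some u` means the `k`-th position is `u`; once `none`, always `none`. -/
structure Play (V : Type) (E : V → V → Prop) where
  f : ℕ → Option V
  first : (f 0).isSome
  closed : ∀ k, f k = none → f (k + 1) = none
  step : ∀ k u v, f k = some u → f (k + 1) = some v → E u v

/-- A play is maximal if it is infinite or ends in a sink. -/
def Play.IsMax {V : Type} {E : V → V → Prop} (α : Play V E) : Prop :=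
  (∀ k, α.f k ≠ none) ∨
    ∃ n u, α.f n = some u ∧ α.f (n + 1) = none ∧ ∀ w, ¬ E u w

/-- A positional strategy for the player owning the vertices `Vi`,
with support `W`: a partial map only defined on `W ∩ Vi`, suggesting
legal moves staying in `W`. -/
structure PStrategy {V : Type} (E : V → V → Prop) (Vi : Set V) where
  W : Set V
  σ : V → Option V
  dom : ∀ w v, σ w = some v → w ∈ W ∧ w ∈ Vi ∧ E w v ∧ v ∈ W

/-- A play follows a positional strategy if, whenever the strategy is defined
at the current position and the play continues, the next position is the
strategy's suggestion. -/
def Play.Follows {V : Type} {E : V → V → Prop} {Vi : Set V} (α : Play V E)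
    (s : PStrategy E Vi) : Prop :=
  ∀ k u v, α.f k = some u → s.σ u = some v → α.f (k + 1) ≠ none → α.f (k + 1) = some v

/-- `s` is a winning strategy (an `i`-strategy) w.r.t. the set of games `C`
and the winning condition `Ci ⊆ C`: every game starting in the support and
following `s` is won. -/
def PStrategy.Winning {V : Type} {E : V → V → Prop} {Vi : Set V}
    (C Ci : Set (Play V E)) (s : PStrategy E Vi) : Prop :=
  ∀ α ∈ C, (∃ u, α.f 0 = some u ∧ u ∈ s.W) → α.Follows s → α ∈ Ci

/-- Order on strategies: larger support and larger graph of the partial map. -/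
def PStrategy.le {V : Type} {E : V → V → Prop} {Vi : Set V}
    (s t : PStrategy E Vi) : Prop :=
  s.W ⊆ t.W ∧ ∀ w v, s.σ w = some v → t.σ w = some v

/-- A maximal winning strategy. -/
def PStrategy.MaxWinning {V : Type} {E : V → V → Prop} {Vi : Set V}
    (C Ci : Set (Play V E)) (s : PStrategy E Vi) : Prop :=
  s.Winning C Ci ∧ ∀ t : PStrategy E Vi, t.Winning C Ci → s.le t → t.le s

/-- Games won by the reaching player `i`: finite paths in `(V∖R)*R`. -/
def ReachWin {V : Type} (E : V → V → Prop) (R : Set V) : Set (Play V E) :=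
  {α | ∃ n u, α.f n = some u ∧ u ∈ R ∧ α.f (n + 1) = none ∧
    ∀ k, k < n → ∀ w, α.f k = some w → w ∉ R}

/-- Games won by the opponent `1 - i`: maximal paths avoiding `R`. -/
def ReachLose {V : Type} (E : V → V → Prop) (R : Set V) : Set (Play V E) :=
  {α | α.IsMax ∧ ∀ k w, α.f k = some w → w ∉ R}

open OrdinalApprox

universe u

section LfpRank

variable {α : Type u} (f : Set α →o Set α)

lemma mem_lfpApprox_bot_iff {a : α} {o : Ordinal.{u}} :
    a ∈ lfpApprox f ⊥ o ↔ ∃ o' < o, a ∈ f (lfpApprox f ⊥ o') := by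
  rw [lfpApprox]
  simp [Set.iSup_eq_iUnion]

lemma lfpApprox_bot_subset_lfp (o : Ordinal.{u}) : lfpApprox f ⊥ o ⊆ f.lfp :=
  lfpApprox_le_of_mem_fixedPoints f f.isFixedPt_lfp bot_le o

noncomputable def lfpRank (a : α) : Ordinal.{u} :=
  sInf {o | a ∈ lfpApprox f ⊥ o}

lemma mem_apply_setOf_lfpRank_lt {a : α} (ha : a ∈ f.lfp) :
    a ∈ f {b | b ∈ f.lfp ∧ lfpRank f b < lfpRank f a} := by
  have hne : {o | a ∈ lfpApprox f ⊥ o}.Nonempty :=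
    ⟨_, (lfpApprox_ord_eq_lfp f).symm ▸ ha⟩
  have hrank : a ∈ lfpApprox f ⊥ (lfpRank f a) := csInf_mem hne
  obtain ⟨o, ho, hao⟩ := (mem_lfpApprox_bot_iff f).1 hrank
  refine f.mono (fun b (hb : b ∈ lfpApprox f ⊥ o) => ?_) hao
  exact ⟨lfpApprox_bot_subset_lfp f o hb,
    (csInf_le' (s := {o | b ∈ lfpApprox f ⊥ o}) hb).trans_lt ho⟩

end LfpRank

section PickMem

variable {α : Type u}

open Classical in
noncomputable def pickMem (s : Set α) : Option α :=
  if h : s.Nonempty then some h.some else none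

lemma mem_of_pickMem_eq_some {s : Set α} {a : α} (h : pickMem s = some a) : a ∈ s := by
  unfold pickMem at h
  split_ifs at h with hs
  exact Option.some_injective _ h ▸ hs.some_mem

lemma pickMem_eq_none_iff {s : Set α} : pickMem s = none ↔ s = ∅ := by
  unfold pickMem
  split_ifs with hs <;> simp [hs, ← Set.not_nonempty_iff_eq_empty]

end PickMem

namespace Play

variable {V : Type} {E : V → V → Prop}

lemma eq_none_of_le (α : Play V E) {m n : ℕ} (hm : α.f m = none) (hmn : m ≤ n) :
    α.f n = none := by
  induction n, hmn using Nat.le_induction with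
  | base => exact hm
  | succ n _ ih => exact α.closed n ih

lemma IsMax.not_edge {α : Play V E} (hmax : α.IsMax) {k : ℕ} {u w : V}
    (hk : α.f k = some u) (hk1 : α.f (k + 1) = none) : ¬ E u w := by
  rcases hmax with hinf | ⟨n, u', hn, hn1, hsink⟩
  · exact absurd hk1 (hinf _)
  · obtain rfl : n = k := by
      by_contra hne
      rcases Nat.lt_or_gt_of_ne hne with h | h
      · simp [α.eq_none_of_le hn1 h] at hk
      · simp [α.eq_none_of_le hk1 h] at hn
    exact Option.some_injective _ (hn.symm.trans hk) ▸ hsink w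

lemma Follows.eq_of_step {Vi : Set V} {s : PStrategy E Vi} {α : Play V E} (hα : α.Follows s)
    {k : ℕ} {u v w : V} (hk : α.f k = some u) (hσ : s.σ u = some v)
    (hk1 : α.f (k + 1) = some w) : w = v :=
  Option.some_injective _ (hk1.symm.trans (hα k u v hk hσ (by simp [hk1])))

lemma forall_mem_of_step (α : Play V E) {S : Set V} (h0 : ∀ u, α.f 0 = some u → u ∈ S)
    (hstep : ∀ k u v, α.f k = some u → α.f (k + 1) = some v → u ∈ S → v ∈ S) :
    ∀ k u, α.f k = some u → u ∈ S := by
  intro k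
  induction k with
  | zero => exact h0
  | succ k ih =>
    intro v hv
    cases hk : α.f k with
    | none => simp [α.closed k hk] at hv
    | some u => exact hstep k u v hk hv (ih u hk)

lemma forall_notMem_of_rank_lt {β : Type*} [Preorder β] [WellFoundedLT β] (α : Play V E)
    {S : Set V} (r : V → β)
    (h : ∀ k u, α.f k = some u → u ∈ S → ∃ v, α.f (k + 1) = some v ∧ v ∈ S ∧ r v < r u) :
    ∀ k u, α.f k = some u → u ∉ S := by
  suffices ∀ b, ∀ k u, r u = b → α.f k = some u → u ∉ S from fun k u => this _ k u rfl
  intro b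
  induction b using WellFoundedLT.induction with
  | ind b ih =>
    rintro k u rfl hk hu
    obtain ⟨v, hv, hvS, hlt⟩ := h k u hk hu
    exact ih _ hlt (k + 1) v rfl hv hvS

def ofNext (next : V → Option V) (hnext : ∀ u v, next u = some v → E u v) (u₀ : V) :
    Play V E where
  f k := (fun o => o.bind next)^[k] (some u₀)
  first := rfl
  closed k h := by rw [Function.iterate_succ_apply', h]; rfl
  step k u v hu hv := by
    rw [Function.iterate_succ_apply', hu] at hv
    exact hnext u v hv

variable {next : V → Option V} {hnext : ∀ u v, next u = some v → E u v} {u₀ : V}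

lemma ofNext_f_succ (k : ℕ) :
    (ofNext next hnext u₀).f (k + 1) = ((ofNext next hnext u₀).f k).bind next :=
  Function.iterate_succ_apply' _ _ _

lemma ofNext_isMax (hsink : ∀ u, next u = none → ∀ w, ¬ E u w) :
    (ofNext next hnext u₀).IsMax := by
  classical
  set α := ofNext next hnext u₀
  by_cases hinf : ∀ k, α.f k ≠ none
  · exact Or.inl hinf
  push Not at hinf
  obtain ⟨m, hm⟩ : ∃ m, Nat.find hinf = m + 1 :=
    Nat.exists_eq_succ_of_ne_zero fun h => by
      have h0 := Nat.find_spec hinf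
      rw [h] at h0
      exact Option.some_ne_none _ h0
  have hm1 : α.f (m + 1) = none := hm ▸ Nat.find_spec hinf
  obtain ⟨u, hu⟩ := Option.ne_none_iff_exists'.1 (Nat.find_min hinf (by omega : m < Nat.find hinf))
  rw [ofNext_f_succ, hu, Option.bind_some] at hm1
  exact Or.inr ⟨m, u, hu, by rw [ofNext_f_succ, hu, Option.bind_some, hm1], hsink u hm1⟩

lemma ofNext_follows {Vi : Set V} {s : PStrategy E Vi}
    (hs : ∀ u v, s.σ u = some v → next u = some v) : (ofNext next hnext u₀).Follows s := by
  intro k u v hk hσ _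
  rw [ofNext_f_succ, hk, Option.bind_some, hs u v hσ]

lemma ofNext_mem {S : Set V} (hu₀ : u₀ ∈ S) (hS : ∀ u v, u ∈ S → next u = some v → v ∈ S) :
    ∀ k u, (ofNext next hnext u₀).f k = some u → u ∈ S := by
  refine forall_mem_of_step _ (fun u hu => Option.some_injective _ hu ▸ hu₀) ?_
  intro k u v hk hv hu
  rw [ofNext_f_succ, hk, Option.bind_some] at hv
  exact hS u v hu hv

end Play

lemma exists_mem_of_mem_reachWin {V : Type} {E : V → V → Prop} {R : Set V} {α : Play V E}
    (h : α ∈ ReachWin E R) : ∃ k u, α.f k = some u ∧ u ∈ R :=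
  let ⟨n, u, hn, hR, _⟩ := h
  ⟨n, u, hn, hR⟩

section Attractor

variable {V : Type} (E : V → V → Prop) (Vi R : Set V)

/-- Controllable predecessor of `X` for the owner of `Vi`. The witness `v` also excludes sinks
of the opponent, where a maximal play ends without reaching `X`. -/
def cpre (X : Set V) : Set V :=
  {u | ∃ v, E u v ∧ v ∈ X ∧ (u ∉ Vi → ∀ w, E u w → w ∈ X)}

lemma cpre_mono : Monotone (cpre E Vi) :=
  fun _ _ hXY _ ⟨v, he, hv, hall⟩ => ⟨v, he, hXY hv, fun hu w hw => hXY (hall hu w hw)⟩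

def attrOp : Set V →o Set V where
  toFun X := R ∪ cpre E Vi X
  monotone' _ _ h := Set.union_subset_union_right R (cpre_mono E Vi h)

def attractor : Set V := (attrOp E Vi R).lfp

noncomputable def attrRank : V → Ordinal.{0} := lfpRank (attrOp E Vi R)

variable {E Vi R}

lemma attractor_eq : R ∪ cpre E Vi (attractor E Vi R) = attractor E Vi R :=
  (attrOp E Vi R).map_lfp

lemma subset_attractor : R ⊆ attractor E Vi R :=
  attractor_eq.subset.trans' Set.subset_union_left

lemma cpre_attractor_subset : cpre E Vi (attractor E Vi R) ⊆ attractor E Vi R :=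
  attractor_eq.subset.trans' Set.subset_union_right

lemma notMem_attractor_of_edge {u v : V} (hVi : u ∈ Vi) (hu : u ∉ attractor E Vi R)
    (he : E u v) : v ∉ attractor E Vi R :=
  fun hv => hu (cpre_attractor_subset ⟨v, he, hv, absurd hVi⟩)

lemma exists_edge_notMem_attractor {u v : V} (hu : u ∉ attractor E Vi R) (he : E u v) :
    ∃ w, E u w ∧ w ∉ attractor E Vi R := by
  by_contra! hall
  exact hu (cpre_attractor_subset ⟨v, he, hall v he, fun _ => hall⟩)

lemma mem_cpre_attrRank_lt {u : V} (hu : u ∈ attractor E Vi R) (hR : u ∉ R) :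
    u ∈ cpre E Vi {v | v ∈ attractor E Vi R ∧ attrRank E Vi R v < attrRank E Vi R u} :=
  (mem_apply_setOf_lfpRank_lt _ hu).resolve_left hR

end Attractor

section Strategies

variable {V : Type} {E : V → V → Prop} {Vi R : Set V}

variable (E Vi R) in
/-- Defined at every vertex of `Vi` in the attractor with a successor in it, also on `R`:
maximality compares the graphs of the strategy maps. -/
noncomputable def attrStrategy : PStrategy E Vi where
  W := attractor E Vi R
  σ u := open Classical in
    if u ∈ Vi ∧ u ∈ attractor E Vi R then
      pickMem {v | E u v ∧ v ∈ attractor E Vi R ∧ (u ∉ R → attrRank E Vi R v < attrRank E Vi R u)}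
    else none
  dom w v h := by
    split_ifs at h with hw
    obtain ⟨he, hv, -⟩ := mem_of_pickMem_eq_some h
    exact ⟨hw.2, hw.1, he, hv⟩

lemma attrStrategy_σ_spec {u v : V} (h : (attrStrategy E Vi R).σ u = some v) :
    v ∈ attractor E Vi R ∧ (u ∉ R → attrRank E Vi R v < attrRank E Vi R u) := by
  simp only [attrStrategy] at h
  split_ifs at h
  exact (mem_of_pickMem_eq_some h).2

lemma attrStrategy_σ_ne_none {u v : V} (hVi : u ∈ Vi) (hu : u ∈ attractor E Vi R) (he : E u v)
    (hv : v ∈ attractor E Vi R) : (attrStrategy E Vi R).σ u ≠ none := by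
  simp only [attrStrategy, if_pos (And.intro hVi hu), ne_eq, pickMem_eq_none_iff]
  by_cases hR : u ∈ R
  · exact Set.nonempty_iff_ne_empty.1 ⟨v, he, hv, absurd hR⟩
  · obtain ⟨w, hw, hwA, -⟩ := mem_cpre_attrRank_lt hu hR
    exact Set.nonempty_iff_ne_empty.1 ⟨w, hw, hwA.1, fun _ => hwA.2⟩

variable (E Vi R) in
noncomputable def escapeStrategy : PStrategy E Viᶜ where
  W := (attractor E Vi R)ᶜ
  σ u := open Classical in
    if u ∉ Vi ∧ u ∉ attractor E Vi R then pickMem {v | E u v ∧ v ∉ attractor E Vi R} else none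
  dom w v h := by
    split_ifs at h with hw
    obtain ⟨he, hv⟩ := mem_of_pickMem_eq_some h
    exact ⟨hw.2, hw.1, he, hv⟩

lemma escapeStrategy_σ_spec {u v : V} (h : (escapeStrategy E Vi R).σ u = some v) :
    v ∉ attractor E Vi R := by
  simp only [escapeStrategy] at h
  split_ifs at h
  exact (mem_of_pickMem_eq_some h).2

lemma escapeStrategy_σ_ne_none {u v : V} (hVi : u ∉ Vi) (hu : u ∉ attractor E Vi R)
    (he : E u v) : (escapeStrategy E Vi R).σ u ≠ none := by
  simp only [escapeStrategy, if_pos (And.intro hVi hu), ne_eq, pickMem_eq_none_iff]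
  exact Set.nonempty_iff_ne_empty.1 (exists_edge_notMem_attractor hu he)

end Strategies

section Determinacy

variable {V : Type} {E : V → V → Prop} {Vi R : Set V}

lemma attrStrategy_winning :
    (attrStrategy E Vi R).Winning (ReachWin E R ∪ ReachLose E R) (ReachWin E R) := by
  rintro α (hwin | ⟨hmax, havoid⟩) ⟨u₀, h0, hu₀⟩ hfollow
  · exact hwin
  refine absurd hu₀ (α.forall_notMem_of_rank_lt (attrRank E Vi R) ?_ 0 u₀ h0)
  intro k u hk hu
  obtain ⟨v, he, hv, hopp⟩ := mem_cpre_attrRank_lt hu (havoid k u hk)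
  cases hk1 : α.f (k + 1) with
  | none => exact absurd he (hmax.not_edge hk hk1)
  | some w =>
    refine ⟨w, rfl, ?_⟩
    by_cases hVi : u ∈ Vi
    · obtain ⟨v', hσ⟩ := Option.ne_none_iff_exists'.1 (attrStrategy_σ_ne_none hVi hu he hv.1)
      obtain rfl := hfollow.eq_of_step hk hσ hk1
      obtain ⟨hw, hlt⟩ := attrStrategy_σ_spec hσ
      exact ⟨hw, hlt (havoid k u hk)⟩
    · exact hopp hVi w (α.step k u w hk hk1)

lemma escapeStrategy_winning :
    (escapeStrategy E Vi R).Winning (ReachWin E R ∪ ReachLose E R) (ReachLose E R) := by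
  rintro α (hwin | hlose) ⟨u₀, h0, hu₀⟩ hfollow
  · exfalso
    have hout : ∀ k u, α.f k = some u → u ∉ attractor E Vi R := by
      refine α.forall_mem_of_step (fun u h => Option.some_injective _ (h0.symm.trans h) ▸ hu₀) ?_
      intro k u w hk hk1 hu
      by_cases hVi : u ∈ Vi
      · exact notMem_attractor_of_edge hVi hu (α.step k u w hk hk1)
      · obtain ⟨v, hσ⟩ := Option.ne_none_iff_exists'.1
          (escapeStrategy_σ_ne_none hVi hu (α.step k u w hk hk1))
        obtain rfl := hfollow.eq_of_step hk hσ hk1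
        exact escapeStrategy_σ_spec hσ
    obtain ⟨k, u, hk, hR⟩ := exists_mem_of_mem_reachWin hwin
    exact hout k u hk (subset_attractor hR)
  · exact hlose

/-- A winning strategy of the reaching player cannot start outside the attractor: there the
opponent keeps the play off the attractor, hence off `R`, for ever or until a sink. -/
lemma PStrategy.Winning.W_subset_attractor {t : PStrategy E Vi}
    (ht : t.Winning (ReachWin E R ∪ ReachLose E R) (ReachWin E R)) :
    t.W ⊆ attractor E Vi R := by
  intro u₀ hu₀W
  by_contra hu₀
  let next (u : V) : Option V :=
    (t.σ u).or ((pickMem {v | E u v ∧ v ∉ attractor E Vi R}).or (pickMem {v | E u v}))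
  have hnext : ∀ u v, next u = some v → E u v := by
    intro u v h
    simp only [next, Option.or_eq_some_iff] at h
    rcases h with h | ⟨-, h | ⟨-, h⟩⟩
    · exact (t.dom u v h).2.2.1
    · exact (mem_of_pickMem_eq_some h).1
    · exact mem_of_pickMem_eq_some h
  have hsink : ∀ u, next u = none → ∀ w, ¬ E u w := by
    intro u h w he
    simp only [next, Option.or_eq_none_iff, pickMem_eq_none_iff] at h
    exact Set.eq_empty_iff_forall_notMem.1 h.2.2 w he
  have hout : ∀ u v, u ∉ attractor E Vi R → next u = some v → v ∉ attractor E Vi R := by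
    intro u v hu h
    simp only [next, Option.or_eq_some_iff, pickMem_eq_none_iff] at h
    rcases h with h | ⟨-, h | ⟨hempty, h⟩⟩
    · obtain ⟨-, hVi, he, -⟩ := t.dom u v h
      exact notMem_attractor_of_edge hVi hu he
    · exact (mem_of_pickMem_eq_some h).2
    · obtain ⟨w, hw⟩ := exists_edge_notMem_attractor hu (mem_of_pickMem_eq_some h)
      exact absurd hempty (Set.nonempty_iff_ne_empty.1 ⟨w, hw⟩)
  let α := Play.ofNext next hnext u₀
  have hαout := Play.ofNext_mem (hnext := hnext) hu₀ hout
  have hlose : α ∈ ReachLose E R :=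
    ⟨Play.ofNext_isMax hsink, fun k w hk hR => hαout k w hk (subset_attractor hR)⟩
  have hfollow : α.Follows t := Play.ofNext_follows fun u v h => by simp [next, h]
  obtain ⟨k, u, hk, hR⟩ := exists_mem_of_mem_reachWin (ht α (Or.inr hlose) ⟨u₀, rfl, hu₀W⟩ hfollow)
  exact hαout k u hk (subset_attractor hR)

lemma attrStrategy_maxWinning :
    (attrStrategy E Vi R).MaxWinning (ReachWin E R ∪ ReachLose E R) (ReachWin E R) := by
  refine ⟨attrStrategy_winning, fun t ht ⟨_, hσ⟩ => ⟨ht.W_subset_attractor, ?_⟩⟩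
  intro w v h
  obtain ⟨hw, hVi, he, hv⟩ := t.dom w v h
  obtain ⟨v', hv'⟩ := Option.ne_none_iff_exists'.1
    (attrStrategy_σ_ne_none hVi (ht.W_subset_attractor hw) he (ht.W_subset_attractor hv))
  rwa [← Option.some_injective _ ((hσ w v' hv').symm.trans h)]

end Determinacy

/-- Reachability games are positionally determined: there is a maximal
`i`-strategy with support `W_i` and a winning strategy for the opponent
with support `V ∖ W_i`. -/
theorem stmt2 {V : Type} {E : V → V → Prop} (Vi Vopp : Set V)
    (hcov : ∀ v, v ∈ Vi ∨ v ∈ Vopp) (hdisj : Vi ∩ Vopp = ∅) (R : Set V) :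
    ∃ (s : PStrategy E Vi) (t : PStrategy E Vopp),
      s.MaxWinning (ReachWin E R ∪ ReachLose E R) (ReachWin E R) ∧
      t.Winning (ReachWin E R ∪ ReachLose E R) (ReachLose E R) ∧
      t.W = s.Wᶜ := by
  obtain rfl : Vopp = Viᶜ := by
    ext v
    have := Set.eq_empty_iff_forall_notMem.1 hdisj v
    grind
  exact ⟨attrStrategy E Vi R, escapeStrategy E Vi R, attrStrategy_maxWinning,
    escapeStrategy_winning, rfl⟩
end

section
/- The i-attractor of a set R in a game graph G equals the support of any maximal positional winning strategy for player i in the reachability game with target set R. -/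
/-- `A` is attracting for the player owning `Vi` (opponent owning `Vopp`). -/
def Attracting {V : Type} (Vi Vopp : Set V) (E : V → V → Prop) (A : Set V) : Prop :=
  (∀ u ∈ Vi, (∃ v, E u v ∧ v ∈ A) → u ∈ A) ∧
  (∀ u ∈ Vopp, (∃ v, E u v) → (∀ v, E u v → v ∈ A) → u ∈ A)

/-- The `i`-attractor of `R`: the smallest `i`-attracting set containing `R`. -/
def attrSet {V : Type} (Vi Vopp : Set V) (E : V → V → Prop) (R : Set V) : Set V :=
  ⋂₀ {A | R ⊆ A ∧ Attracting Vi Vopp E A}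

section Aux

variable {V : Type} {E : V → V → Prop} {Vi : Set V}

lemma Play.none_mono (α : Play V E) {k : ℕ} (h : α.f k = none) :
    ∀ m, k ≤ m → α.f m = none := by
  intro m hm
  induction m with
  | zero => exact (Nat.le_zero.mp hm) ▸ h
  | succ n ih =>
    rcases Nat.le_succ_iff_eq_or_le.mp hm with h' | h'
    · subst h'; exact h
    · exact α.closed n (ih h')

lemma lose_sink {R : Set V} {α : Play V E} (hα : α ∈ ReachLose E R) {u}
    (h0 : α.f 0 = some u) (h1 : α.f 1 = none) : ∀ w, ¬ E u w := by
  rcases hα.1 with hinf | ⟨n, u', hn, _, hsink⟩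
  · exact absurd h1 (hinf 1)
  · have hn0 : n = 0 := by
      by_contra h
      have := α.none_mono h1 n (by omega)
      rw [this] at hn; exact nomatch hn
    subst hn0
    rw [h0] at hn
    injection hn with h
    exact h ▸ hsink

/-- The shift of a play by one step. -/
def Play.shift (α : Play V E) (h : (α.f 1).isSome) : Play V E where
  f k := α.f (k + 1)
  first := h
  closed k hk := α.closed (k + 1) hk
  step k u v hu hv := α.step (k + 1) u v hu hv

lemma shift_lose {R : Set V} {α : Play V E} (h : (α.f 1).isSome)
    (hα : α ∈ ReachLose E R) : α.shift h ∈ ReachLose E R := by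
  constructor
  · rcases hα.1 with hinf | ⟨n, u, hn, hn1, hsink⟩
    · exact Or.inl fun k => hinf (k + 1)
    · right
      obtain ⟨m, rfl⟩ : ∃ m, n = m + 1 := by
        cases n with
        | zero => rw [hn1] at h; exact absurd h (by simp)
        | succ m => exact ⟨m, rfl⟩
      exact ⟨m, u, hn, hn1, hsink⟩
  · intro k w hk
    exact hα.2 (k + 1) w hk

lemma shift_follows {α : Play V E} {s : PStrategy E Vi} (h : (α.f 1).isSome)
    (hf : α.Follows s) : (α.shift h).Follows s :=
  fun k u v hu hv hn => hf (k + 1) u v hu hv hn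

lemma follows_of_le {α : Play V E} {s t : PStrategy E Vi} (h : s.le t)
    (hf : α.Follows t) : α.Follows s :=
  fun k u v hk hσ hn => hf k u v hk (h.2 u v hσ) hn

/-- If a play in `C` following `s` moves in one step into the support of the
winning strategy `s`, it is won. -/
lemma win_of_next {R : Set V} {s : PStrategy E Vi}
    (hw : s.Winning (ReachWin E R ∪ ReachLose E R) (ReachWin E R))
    {α : Play V E} (hC : α ∈ ReachWin E R ∪ ReachLose E R)
    {v : V} (h1 : α.f 1 = some v) (hv : v ∈ s.W) (hf : α.Follows s) :
    α ∈ ReachWin E R := by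
  rcases hC with h | h
  · exact h
  · exfalso
    have hsm : (α.f 1).isSome := by rw [h1]; rfl
    have hβ := shift_lose hsm h
    have hwin : α.shift hsm ∈ ReachWin E R :=
      hw _ (Or.inr hβ) ⟨v, h1, hv⟩ (shift_follows hsm hf)
    obtain ⟨n, u, hn, huR, -, -⟩ := hwin
    exact hβ.2 n u hn huR

/-- Iterating a partial successor map from a start vertex. -/
def iterOpt (next : V → Option V) (w : V) : ℕ → Option V
  | 0 => some w
  | (k + 1) => (iterOpt next w k).bind next

/-- From every vertex of `P` one can stay inside `P` while following `s`;
hence there is a maximal play from any `w ∈ P` staying in `P` following `s`. -/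
lemma exists_escape_play (s : PStrategy E Vi) (P : Set V) (w : V) (hw : w ∈ P)
    (h : ∀ u ∈ P, (∃ v, E u v) →
      ∃ v, E u v ∧ v ∈ P ∧ ∀ v', s.σ u = some v' → v = v') :
    ∃ α : Play V E, α.f 0 = some w ∧ α.IsMax ∧ α.Follows s ∧
      ∀ k u, α.f k = some u → u ∈ P := by
  classical
  choose g hg1 hg2 hg3 using h
  set next : V → Option V := fun u =>
    if hu : u ∈ P ∧ ∃ v, E u v then some (g u hu.1 hu.2) else none with hnext
  have next_spec : ∀ u v, next u = some v →
      E u v ∧ v ∈ P ∧ ∀ v', s.σ u = some v' → v = v' := by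
    intro u v hv
    rw [hnext] at hv
    dsimp only at hv
    split at hv
    · rename_i hu
      injection hv with hv
      exact hv ▸ ⟨hg1 u hu.1 hu.2, hg2 u hu.1 hu.2, hg3 u hu.1 hu.2⟩
    · exact nomatch hv
  have next_none : ∀ u, u ∈ P → next u = none → ∀ v, ¬ E u v := by
    intro u hu hn v hE
    rw [hnext] at hn
    dsimp only at hn
    rw [dif_pos ⟨hu, v, hE⟩] at hn
    exact nomatch hn
  set F : ℕ → Option V := iterOpt next w with hF
  have hF0 : F 0 = some w := rfl
  have hFs : ∀ k, F (k + 1) = (F k).bind next := fun _ => rfl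
  have hinv : ∀ k u, F k = some u → u ∈ P := by
    intro k
    induction k with
    | zero =>
      intro u hu
      rw [hF0] at hu
      injection hu with hu
      exact hu ▸ hw
    | succ n ih =>
      intro u hu
      rw [hFs n] at hu
      obtain ⟨u', hu', hnu⟩ := Option.bind_eq_some_iff.mp hu
      exact (next_spec u' u hnu).2.1
  have hstep : ∀ k u, F k = some u → F (k + 1) = next u := by
    intro k u hu
    rw [hFs k, hu]; rfl
  refine ⟨⟨F, ?_, ?_, ?_⟩, hF0, ?_, ?_, hinv⟩
  · rw [hF0]; rfl
  · intro k hk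
    rw [hFs k, hk]; rfl
  · intro k u v hu hv
    rw [hstep k u hu] at hv
    exact (next_spec u v hv).1
  · by_cases hfin : ∀ k, F k ≠ none
    · exact Or.inl hfin
    · right
      push_neg at hfin
      obtain ⟨n, hn⟩ := hfin
      have hex : ∃ n, F n = none := ⟨n, hn⟩
      have hm : F (Nat.find hex) = none := Nat.find_spec hex
      have hmin : ∀ k, k < Nat.find hex → F k ≠ none := fun k hk => Nat.find_min hex hk
      set m := Nat.find hex with hmdef
      clear_value m
      obtain ⟨m', rfl⟩ : ∃ m', m = m' + 1 := by
        cases m with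
        | zero => rw [hF0] at hm; exact absurd hm (by simp)
        | succ m' => exact ⟨m', rfl⟩
      have hm' : F m' ≠ none := hmin m' (Nat.lt_succ_self m')
      obtain ⟨u, hu⟩ := Option.ne_none_iff_exists'.mp hm'
      refine ⟨m', u, hu, hm, ?_⟩
      have hnone : next u = none := by rw [← hstep m' u hu]; exact hm
      exact next_none u (hinv m' u hu) hnone
  · intro k u v hk hσ hne
    have h1 : F (k + 1) = next u := hstep k u hk
    have hne' : next u ≠ none := fun hc => hne (h1.trans hc)
    obtain ⟨v', hv'⟩ := Option.ne_none_iff_exists'.mp hne'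
    show F (k + 1) = some v
    rw [h1, hv', (next_spec u v' hv').2.2 v hσ]

end Aux

/-- The `i`-attractor of `R` equals the support of any maximal positional
winning strategy for player `i` in the reachability game with target `R`. -/
theorem stmt3 {V : Type} {E : V → V → Prop} (Vi Vopp : Set V)
    (hcov : ∀ v, v ∈ Vi ∨ v ∈ Vopp) (hdisj : Vi ∩ Vopp = ∅) (R : Set V)
    (s : PStrategy E Vi)
    (hs : s.MaxWinning (ReachWin E R ∪ ReachLose E R) (ReachWin E R)) :
    s.W = attrSet Vi Vopp E R := by
  classical
  apply Set.Subset.antisymm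
  · -- s.W ⊆ attrSet
    intro w hw
    refine Set.mem_sInter.2 fun A hA => ?_
    obtain ⟨hRA, hAatt⟩ := hA
    by_contra hwA
    -- from each vertex outside A we can stay outside A following s
    have hesc : ∀ u ∈ (Aᶜ : Set V), (∃ v, E u v) →
        ∃ v, E u v ∧ v ∈ (Aᶜ : Set V) ∧ ∀ v', s.σ u = some v' → v = v' := by
      intro u huA hex
      cases hσ : s.σ u with
      | some v' =>
        obtain ⟨-, huVi, hE, -⟩ := s.dom u v' hσ
        refine ⟨v', hE, fun hv'A => huA (hAatt.1 u huVi ⟨v', hE, hv'A⟩), ?_⟩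
        intro v'' h; exact Option.some.inj h
      | none =>
        rcases hcov u with hVi | hVopp
        · obtain ⟨v0, hv0⟩ := hex
          refine ⟨v0, hv0, fun hv0A => huA (hAatt.1 u hVi ⟨v0, hv0, hv0A⟩), ?_⟩
          intro v'' h; exact nomatch h
        · by_cases hall : ∀ v, E u v → v ∈ A
          · exact absurd (hAatt.2 u hVopp hex hall) huA
          · push_neg at hall
            obtain ⟨v0, hv0, hv0A⟩ := hall
            refine ⟨v0, hv0, hv0A, ?_⟩
            intro v'' h; exact nomatch h
    obtain ⟨α, h0, hmax, hfol, hinv⟩ := exists_escape_play s (Aᶜ) w hwA hesc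
    have hlose : α ∈ ReachLose E R :=
      ⟨hmax, fun k v hv hvR => hinv k v hv (hRA hvR)⟩
    have hwin : α ∈ ReachWin E R :=
      hs.1 α (Or.inr hlose) ⟨w, h0, hw⟩ hfol
    obtain ⟨n, u, hn, huR, -, -⟩ := hwin
    exact hlose.2 n u hn huR
  · -- attrSet ⊆ s.W
    apply Set.sInter_subset_of_mem
    constructor
    · -- R ⊆ s.W
      intro r hr
      set t : PStrategy E Vi :=
        ⟨s.W ∪ R, s.σ, fun w v h =>
          ⟨Or.inl (s.dom w v h).1, (s.dom w v h).2.1, (s.dom w v h).2.2.1,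
            Or.inl (s.dom w v h).2.2.2⟩⟩ with ht
      have hle : s.le t := ⟨Set.subset_union_left, fun _ _ h => h⟩
      have htw : t.Winning (ReachWin E R ∪ ReachLose E R) (ReachWin E R) := by
        intro α hC hu hf
        obtain ⟨u, h0, hu⟩ := hu
        cases hu with
        | inl h => exact hs.1 α hC ⟨u, h0, h⟩ (follows_of_le hle hf)
        | inr hR' =>
          rcases hC with h | h
          · exact h
          · exact absurd hR' (h.2 0 u h0)
      exact (hs.2 t htw hle).1 (Or.inr hr)
    · constructor
      · -- Vi case
        rintro u huVi ⟨v, hE, hvW⟩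
        cases hσ : s.σ u with
        | some v' => exact (s.dom u v' hσ).1
        | none =>
          set t : PStrategy E Vi :=
            ⟨insert u s.W, fun x => if x = u then some v else s.σ x, by
              intro w v' h
              by_cases hwu : w = u
              · subst hwu
                rw [if_pos rfl] at h
                injection h with h
                exact h ▸ ⟨Set.mem_insert _ _, huVi, hE, Or.inr hvW⟩
              · rw [if_neg hwu] at h
                obtain ⟨h1, h2, h3, h4⟩ := s.dom w v' h
                exact ⟨Or.inr h1, h2, h3, Or.inr h4⟩⟩ with ht
          have hle : s.le t := by
            refine ⟨Set.subset_insert _ _, fun w v' h => ?_⟩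
            have hwu : w ≠ u := fun hc => by rw [hc, hσ] at h; exact nomatch h
            show (if w = u then some v else s.σ w) = some v'
            rw [if_neg hwu]; exact h
          have htw : t.Winning (ReachWin E R ∪ ReachLose E R) (ReachWin E R) := by
            intro α hC hu0 hf
            obtain ⟨u0, h0, hu0⟩ := hu0
            rcases Set.mem_insert_iff.mp hu0 with rfl | hu0W
            · -- starts at u
              rcases hC with h | h
              · exact h
              · exfalso
                have htσ : t.σ u0 = some v := by
                  show (if u0 = u0 then some v else s.σ u0) = some v
                  rw [if_pos rfl]
                have h1ne : α.f 1 ≠ none := by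
                  intro h1
                  exact lose_sink h h0 h1 v hE
                have h1 : α.f 1 = some v := hf 0 u0 v h0 htσ h1ne
                have := win_of_next hs.1 (Or.inr h) h1 hvW (follows_of_le hle hf)
                obtain ⟨n, u', hn, huR, -, -⟩ := this
                exact h.2 n u' hn huR
            · exact hs.1 α hC ⟨u0, h0, hu0W⟩ (follows_of_le hle hf)
          exact (hs.2 t htw hle).1 (Set.mem_insert _ _)
      · -- Vopp case
        rintro u huVopp ⟨v0, hE0⟩ hall
        set t : PStrategy E Vi :=
          ⟨insert u s.W, s.σ, fun w v h =>
            ⟨Or.inr (s.dom w v h).1, (s.dom w v h).2.1, (s.dom w v h).2.2.1,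
              Or.inr (s.dom w v h).2.2.2⟩⟩ with ht
        have hle : s.le t := ⟨Set.subset_insert _ _, fun _ _ h => h⟩
        have htw : t.Winning (ReachWin E R ∪ ReachLose E R) (ReachWin E R) := by
          intro α hC hu0 hf
          obtain ⟨u0, h0, hu0⟩ := hu0
          rcases Set.mem_insert_iff.mp hu0 with rfl | hu0W
          · rcases hC with h | h
            · exact h
            · exfalso
              have h1ne : α.f 1 ≠ none := by
                intro h1
                exact lose_sink h h0 h1 v0 hE0
              obtain ⟨v1, h1⟩ := Option.ne_none_iff_exists'.mp h1ne
              have hEv1 : E u0 v1 := α.step 0 u0 v1 h0 h1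
              have := win_of_next hs.1 (Or.inr h) h1 (hall v1 hEv1)
                (follows_of_le hle hf)
              obtain ⟨n, u', hn, huR, -, -⟩ := this
              exact h.2 n u' hn huR
          · exact hs.1 α hC ⟨u0, h0, hu0W⟩ (follows_of_le hle hf)
        exact (hs.2 t htw hle).1 (Set.mem_insert _ _)
end

section
/- In the reachability game, player 1−i has a positional winning strategy whose support is the complement V \ attr_i(G,R) of the i-attractor of R; in particular, from every vertex outside the i-attractor, player 1−i can force the game to never visit R. -/
/-- In the reachability game, the opponent `1-i` has a positional winning
strategy whose support is the complement of the `i`-attractor of `R`: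
from every vertex outside the attractor, the opponent can force the game
never to visit `R`. -/
theorem stmt5 {V : Type} {E : V → V → Prop} (Vi Vopp : Set V)
    (hcov : ∀ v, v ∈ Vi ∨ v ∈ Vopp) (hdisj : Vi ∩ Vopp = ∅) (R : Set V) :
    ∃ t : PStrategy E Vopp,
      t.W = (attrSet Vi Vopp E R)ᶜ ∧
      t.Winning (ReachWin E R ∪ ReachLose E R) (ReachLose E R) := by
  classical
  set A := attrSet Vi Vopp E R with hA
  have hAattr : Attracting Vi Vopp E A := by
    constructor
    · rintro u hu ⟨v, hv, hvA⟩
      intro B hB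
      exact hB.2.1 u hu ⟨v, hv, hvA B hB⟩
    · intro u hu hex hall B hB
      exact hB.2.2 u hu hex (fun v hv => hall v hv B hB)
  have hRA : R ⊆ A := fun r hr B hB => hB.1 hr
  refine ⟨⟨Aᶜ, fun u => if h : u ∈ Vopp ∧ u ∉ A ∧ ∃ v, E u v ∧ v ∉ A
      then some h.2.2.choose else none, ?_⟩, rfl, ?_⟩
  · intro w v h
    by_cases hh : w ∈ Vopp ∧ w ∉ A ∧ ∃ v, E w v ∧ v ∉ A
    · rw [dif_pos hh] at h
      obtain ⟨hE, hvA⟩ := hh.2.2.choose_spec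
      cases h
      exact ⟨hh.2.1, hh.1, hE, hvA⟩
    · rw [dif_neg hh] at h; exact absurd h (by simp)
  · rintro α hαC ⟨u0, h0, h0W⟩ hfol
    have key : ∀ k u, α.f k = some u → u ∉ A := by
      intro k
      induction k with
      | zero => intro u hu; rw [h0] at hu; cases hu; exact h0W
      | succ k ih =>
        intro u hu
        obtain ⟨w, hw⟩ : ∃ w, α.f k = some w := by
          cases hfk : α.f k with
          | none => rw [α.closed k hfk] at hu; exact absurd hu (by simp)
          | some w => exact ⟨w, rfl⟩
        have hwA : w ∉ A := ih w hw
        have hEwu : E w u := α.step k w u hw hu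
        rcases hcov w with hwVi | hwVopp
        · intro huA
          exact hwA (hAattr.1 w hwVi ⟨u, hEwu, huA⟩)
        · by_cases hex : ∃ v, E w v ∧ v ∉ A
          · have hh : w ∈ Vopp ∧ w ∉ A ∧ ∃ v, E w v ∧ v ∉ A := ⟨hwVopp, hwA, hex⟩
            have hσ : (if h : w ∈ Vopp ∧ w ∉ A ∧ ∃ v, E w v ∧ v ∉ A
                then some h.2.2.choose else none) = some hh.2.2.choose := dif_pos hh
            have := hfol k w hh.2.2.choose hw hσ (by rw [hu]; simp)
            rw [hu] at this; cases this
            exact hh.2.2.choose_spec.2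
          · push_neg at hex
            exact absurd (hAattr.2 w hwVopp ⟨u, hEwu⟩ hex) hwA
    rcases hαC with hαW | hαL
    · obtain ⟨n, u, hn, huR, -⟩ := hαW
      exact absurd (hRA huR) (key n u hn)
    · exact hαL
end

section
/- For a finite game graph, the winning distance function is unique: if d and d' both satisfy d(u)=0 for u ∈ R, d(u)=min{1+d(v) : (u,v) ∈ E} for u ∈ V_i∖R, and d(u)=max{1+d(v) : (u,v) ∈ E} for u ∈ V_{1−i}∖R (with min∅ = max∅ = ∞ and 1+∞ = ∞), then d = d'. -/
/-- The winning-distance equations for the reachability game with target `R`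
of the player owning `Vi` (with `min ∅ = max ∅ = ∞`). -/
def IsWinDist {V : Type} (Vi Vopp : Set V) (E : V → V → Prop) (R : Set V)
    (d : V → ℕ∞) : Prop :=
  (∀ u ∈ R, d u = 0) ∧
  (∀ u, u ∈ Vi → u ∉ R → d u = sInf {m : ℕ∞ | ∃ v, E u v ∧ m = 1 + d v}) ∧
  (∀ u, u ∈ Vopp → u ∉ R → (∃ v, E u v) →
    d u = sSup {m : ℕ∞ | ∃ v, E u v ∧ m = 1 + d v}) ∧
  (∀ u, u ∈ Vopp → u ∉ R → (∀ v, ¬ E u v) → d u = ⊤)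

lemma enat_one_add_le_coe_iff (x : ℕ∞) (k : ℕ) :
    1 + x ≤ (↑(k + 1) : ℕ∞) ↔ x ≤ (k : ℕ∞) := by
  rw [add_comm, Nat.cast_add, Nat.cast_one]
  exact WithTop.add_le_add_iff_right WithTop.one_ne_top

lemma enat_eq_of_forall_nat (a b : ℕ∞) (h : ∀ n : ℕ, a ≤ n ↔ b ≤ n) : a = b := by
  refine le_antisymm ?_ ?_
  · rcases eq_or_ne b ⊤ with hb | hb
    · simp [hb]
    · lift b to ℕ using hb
      exact (h b).mpr le_rfl
  · rcases eq_or_ne a ⊤ with ha | ha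
    · simp [ha]
    · lift a to ℕ using ha
      exact (h a).mp le_rfl

lemma winDist_step {V : Type} [Fintype V] {E : V → V → Prop} (Vi Vopp : Set V)
    (hcov : ∀ v, v ∈ Vi ∨ v ∈ Vopp) (hdisj : Vi ∩ Vopp = ∅) (R : Set V)
    (d d' : V → ℕ∞)
    (hd : IsWinDist Vi Vopp E R d) (hd' : IsWinDist Vi Vopp E R d')
    (n : ℕ) (IH : ∀ m : ℕ, m < n → ∀ u, d u ≤ m ↔ d' u ≤ m) :
    ∀ u, d u ≤ n → d' u ≤ n := by
  intro u hu
  by_cases hR : u ∈ R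
  · rw [hd'.1 u hR]; exact zero_le
  rcases hcov u with hVi | hVo
  · -- Vi case: min
    have hne : u ∉ Vopp := by
      intro h; have : u ∈ Vi ∩ Vopp := ⟨hVi, h⟩; rw [hdisj] at this; exact this
    rw [hd.2.1 u hVi hR] at hu
    set S : Set ℕ∞ := {m : ℕ∞ | ∃ v, E u v ∧ m = 1 + d v} with hS
    have hSne : S.Nonempty := by
      by_contra hemp
      rw [Set.not_nonempty_iff_eq_empty] at hemp
      rw [hemp, sInf_empty] at hu
      exact (by simp : (⊤ : ℕ∞) ≠ ↑n) (top_le_iff.mp hu ▸ rfl)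
    have hSfin : S.Finite := by
      have : S ⊆ (fun v => 1 + d v) '' Set.univ := by
        rintro m ⟨v, _, rfl⟩; exact ⟨v, trivial, rfl⟩
      exact (Set.toFinite _).subset this
    have hmem : sInf S ∈ S := hSne.csInf_mem hSfin
    obtain ⟨v, hEv, hval⟩ := hmem
    have h1 : 1 + d v ≤ ↑n := hval ▸ hu
    obtain ⟨k, rfl⟩ : ∃ k, n = k + 1 := by
      cases n with
      | zero => simp at h1
      | succ k => exact ⟨k, rfl⟩
    have hdk : d v ≤ (k : ℕ∞) := (enat_one_add_le_coe_iff _ _).mp h1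
    have hd'k : d' v ≤ (k : ℕ∞) := (IH k (Nat.lt_succ_self k) v).mp hdk
    rw [hd'.2.1 u hVi hR]
    calc sInf {m : ℕ∞ | ∃ v, E u v ∧ m = 1 + d' v} ≤ 1 + d' v :=
          sInf_le ⟨v, hEv, rfl⟩
      _ ≤ ↑(k + 1) := (enat_one_add_le_coe_iff _ _).mpr hd'k
  · -- Vopp case
    by_cases hE : ∃ v, E u v
    · rw [hd.2.2.1 u hVo hR hE] at hu
      rw [hd'.2.2.1 u hVo hR hE]
      refine sSup_le ?_
      rintro m ⟨v, hEv, rfl⟩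
      have h1 : 1 + d v ≤ ↑n := le_trans (le_sSup (show (1 + d v) ∈ {m : ℕ∞ | ∃ w, E u w ∧ m = 1 + d w} from ⟨v, hEv, rfl⟩)) hu
      obtain ⟨k, rfl⟩ : ∃ k, n = k + 1 := by
        cases n with
        | zero => simp at h1
        | succ k => exact ⟨k, rfl⟩
      have hdk : d v ≤ (k : ℕ∞) := (enat_one_add_le_coe_iff _ _).mp h1
      have hd'k : d' v ≤ (k : ℕ∞) := (IH k (Nat.lt_succ_self k) v).mp hdk
      exact (enat_one_add_le_coe_iff _ _).mpr hd'k
    · push_neg at hE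
      rw [hd.2.2.2 u hVo hR hE] at hu
      exact absurd (top_le_iff.mp hu) (by simp)

/-- For a finite game graph, the winning distance is unique. -/
theorem stmt6 {V : Type} [Fintype V] {E : V → V → Prop} (Vi Vopp : Set V)
    (hcov : ∀ v, v ∈ Vi ∨ v ∈ Vopp) (hdisj : Vi ∩ Vopp = ∅) (R : Set V)
    (d d' : V → ℕ∞)
    (hd : IsWinDist Vi Vopp E R d) (hd' : IsWinDist Vi Vopp E R d') :
    d = d' := by
  have key : ∀ n : ℕ, ∀ u, d u ≤ n ↔ d' u ≤ n := by
    intro n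
    induction n using Nat.strong_induction_on with
    | _ n IH =>
      intro u
      constructor
      · exact winDist_step Vi Vopp hcov hdisj R d d' hd hd' n
          (fun m hm u => IH m hm u) u
      · exact winDist_step Vi Vopp hcov hdisj R d' d hd' hd n
          (fun m hm u => (IH m hm u).symm) u
  funext u
  exact enat_eq_of_forall_nat _ _ (fun n => key n u)
end

section
/- Let (W_i, F_i) be a maximal positional winning strategy for player i in a reachability game on a finite game graph with winning distance d. Then for every u ∈ W_i there exists a game starting at u and following (W_i, F_i) which uses at least d(u) moves before reaching R. -/
/-- For every `u` in the support of a maximal `i`-strategy of a reachability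
game on a finite game graph, there is a game starting at `u` and following the
strategy which uses at least `d u` moves. -/
theorem stmt8 {V : Type} [Fintype V] {E : V → V → Prop} (Vi Vopp : Set V)
    (hcov : ∀ v, v ∈ Vi ∨ v ∈ Vopp) (hdisj : Vi ∩ Vopp = ∅) (R : Set V)
    (d : V → ℕ∞) (hd : IsWinDist Vi Vopp E R d)
    (s : PStrategy E Vi)
    (hs : s.MaxWinning (ReachWin E R ∪ ReachLose E R) (ReachWin E R)) :
    ∀ u ∈ s.W, ∃ α ∈ ReachWin E R ∪ ReachLose E R,
      α.f 0 = some u ∧ α.Follows s ∧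
      ∀ n : ℕ, α.f (n + 1) = none → d u ≤ (n : ℕ∞) := by
  classical
  intro u hu
  -- existence of d-maximal successors
  have maxex : ∀ a : V, (∃ v, E a v) → ∃ v, E a v ∧ ∀ w, E a w → d w ≤ d v := by
    intro a ⟨v0, hv0⟩
    obtain ⟨b, hb, hmax⟩ := (Finset.univ.filter (fun v => E a v)).exists_max_image d
      ⟨v0, by simp [hv0]⟩
    exact ⟨b, by simpa using hb, fun w hw => hmax w (by simp [hw])⟩
  -- the next-move function
  set nextFun : V → Option V := fun a =>
    if a ∈ R then none
    else match s.σ a with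
      | some v => some v
      | none =>
        if h : ∃ v, E a v ∧ ∀ w, E a w → d w ≤ d v then some h.choose else none
    with hnextFun
  have next_R : ∀ a, a ∈ R → nextFun a = none := by
    intro a haR; simp [hnextFun, haR]
  have next_follow : ∀ a b, a ∉ R → s.σ a = some b → nextFun a = some b := by
    intro a b haR hσ; simp [hnextFun, haR, hσ]
  have next_none : ∀ a, a ∉ R → s.σ a = none →
      nextFun a = if h : ∃ v, E a v ∧ ∀ w, E a w → d w ≤ d v
        then some h.choose else none := by
    intro a haR hσ; simp [hnextFun, haR, hσ]
  -- at opponent vertices the strategy is undefined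
  have σopp : ∀ a, a ∈ Vopp → s.σ a = none := by
    intro a hVo
    rcases hσ : s.σ a with _ | v
    · rfl
    · have hVi := (s.dom a v hσ).2.1
      have : a ∈ Vi ∩ Vopp := ⟨hVi, hVo⟩
      rw [hdisj] at this; exact absurd this (Set.notMem_empty a)
  -- basic facts about nextFun
  have next_edge : ∀ a b, nextFun a = some b → E a b := by
    intro a b hab
    by_cases haR : a ∈ R
    · rw [next_R a haR] at hab; exact absurd hab (by simp)
    · rcases hσ : s.σ a with _ | v
      · rw [next_none a haR hσ] at hab
        by_cases h : ∃ v, E a v ∧ ∀ w, E a w → d w ≤ d v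
        · rw [dif_pos h] at hab; cases hab; exact h.choose_spec.1
        · rw [dif_neg h] at hab; exact absurd hab (by simp)
      · rw [next_follow a v haR hσ] at hab
        cases hab; exact ((s.dom a b hσ).2.2).1
  have next_sink : ∀ a, a ∉ R → nextFun a = none → ∀ v, ¬ E a v := by
    intro a haR hnone
    rcases hσ : s.σ a with _ | v
    · rw [next_none a haR hσ] at hnone
      by_cases h : ∃ v, E a v ∧ ∀ w, E a w → d w ≤ d v
      · rw [dif_pos h] at hnone; exact absurd hnone (by simp)
      · intro v hv; exact h (maxex a ⟨v, hv⟩)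
    · rw [next_follow a v haR hσ] at hnone; exact absurd hnone (by simp)
  -- key distance inequality along a move
  have next_d : ∀ a b, nextFun a = some b → d a ≤ 1 + d b := by
    intro a b hab
    by_cases haR : a ∈ R
    · rw [next_R a haR] at hab; exact absurd hab (by simp)
    have hE : E a b := next_edge a b hab
    rcases hcov a with hVi | hVo
    · rw [hd.2.1 a hVi haR]
      exact sInf_le ⟨b, hE, rfl⟩
    · have hσ : s.σ a = none := σopp a hVo
      rw [next_none a haR hσ] at hab
      by_cases h : ∃ v, E a v ∧ ∀ w, E a w → d w ≤ d v
      · rw [dif_pos h] at hab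
        cases hab
        rw [hd.2.2.1 a hVo haR ⟨_, hE⟩]
        apply sSup_le
        rintro m ⟨w, hw, rfl⟩
        exact add_le_add_right (h.choose_spec.2 w hw) 1
      · rw [dif_neg h] at hab; exact absurd hab (by simp)
  -- the play
  set F : ℕ → Option V := fun n => Nat.rec (some u) (fun _ ih => ih.bind nextFun) n
    with hF
  have hF0 : F 0 = some u := rfl
  have hFsucc : ∀ n, F (n + 1) = (F n).bind nextFun := fun n => rfl
  have hFnext : ∀ n a, F n = some a → F (n + 1) = nextFun a := by
    intro n a ha; rw [hFsucc, ha, Option.bind_some]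
  have hclosed : ∀ k, F k = none → F (k + 1) = none := by
    intro k hk; rw [hFsucc, hk]; rfl
  have hclosed' : ∀ k m, F k = none → F (k + m) = none := by
    intro k m hk
    induction m with
    | zero => exact hk
    | succ m ih => exact hclosed _ ih
  have hstep : ∀ k a b, F k = some a → F (k + 1) = some b → E a b := by
    intro k a b ha hb
    rw [hFnext k a ha] at hb
    exact next_edge a b hb
  set α : Play V E := ⟨F, by rw [hF0]; rfl, hclosed, hstep⟩ with hα
  have hαf : α.f = F := rfl
  have hfollows : α.Follows s := by
    intro k a v ha hσ hne
    rw [hαf] at ha hne ⊢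
    rw [hFnext k a ha] at hne ⊢
    have haR : a ∉ R := fun haR => hne (next_R a haR)
    exact next_follow a v haR hσ
  -- distance bound along the play
  have hdist : ∀ n w, F n = some w → d u ≤ (n : ℕ∞) + d w := by
    intro n
    induction n with
    | zero => intro w hw; rw [hF0] at hw; cases hw; simp
    | succ n ih =>
      intro w hw
      rcases ha : F n with _ | a
      · rw [hclosed n ha] at hw; exact absurd hw (by simp)
      · rw [hFnext n a ha] at hw
        have h1 : d a ≤ 1 + d w := next_d a w hw
        calc d u ≤ (n : ℕ∞) + d a := ih a ha
          _ ≤ (n : ℕ∞) + (1 + d w) := add_le_add_right h1 _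
          _ = ((n + 1 : ℕ) : ℕ∞) + d w := by push_cast; ring
  -- a position in R ends the play
  have hnotR_before : ∀ k x, F k = some x → x ∈ R → F (k + 1) = none := by
    intro k x hx hxR
    rw [hFnext k x hx]; exact next_R x hxR
  by_cases hfin : ∃ m, F (m + 1) = none
  · -- the play ends
    obtain ⟨n, hPn, hmin, hmin'⟩ :
        ∃ n, F (n + 1) = none ∧ (∀ m, m < n → F (m + 1) ≠ none) ∧
          ∀ m, F (m + 1) = none → n ≤ m :=
      ⟨Nat.find hfin, Nat.find_spec hfin, fun m hm => Nat.find_min hfin hm,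
        fun m hm => Nat.find_min' hfin hm⟩
    have hFn : ∃ w, F n = some w := by
      rcases hw : F n with _ | w
      · exfalso
        cases n with
        | zero => rw [hF0] at hw; exact absurd hw (by simp)
        | succ m => exact hmin m (Nat.lt_succ_self m) hw
      · exact ⟨w, rfl⟩
    obtain ⟨w, hw⟩ := hFn
    have hbefore : ∀ k, k < n → ∀ x, F k = some x → x ∉ R := by
      intro k hk x hx hxR
      exact hmin k hk (hnotR_before k x hx hxR)
    have hlater : ∀ k, n + 1 ≤ k → F k = none := by
      intro k hk
      obtain ⟨m, rfl⟩ := Nat.exists_eq_add_of_le hk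
      exact hclosed' _ _ hPn
    by_cases hwR : w ∈ R
    · -- the play is won : it is in ReachWin
      refine ⟨α, Or.inl ⟨n, w, hw, hwR, hPn, hbefore⟩, hF0, hfollows, ?_⟩
      intro m hm
      have h1 : d u ≤ (n : ℕ∞) := by
        have := hdist n w hw
        rwa [hd.1 w hwR, add_zero] at this
      exact h1.trans (by exact_mod_cast hmin' m hm)
    · -- the play ends in a sink outside R : contradiction with winning
      exfalso
      have hsink : ∀ v, ¬ E w v := by
        apply next_sink w hwR
        rw [← hFnext n w hw]; exact hPn
      have havoid : ∀ k x, F k = some x → x ∉ R := by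
        intro k x hx
        rcases lt_or_ge k n with h | h
        · exact hbefore k h x hx
        · rcases eq_or_lt_of_le h with h | h
          · rw [h] at hw; rw [hw] at hx; cases hx; exact hwR
          · rw [hlater k h] at hx; exact absurd hx (by simp)
      have hlose : α ∈ ReachLose E R :=
        ⟨Or.inr ⟨n, w, hw, hPn, hsink⟩, havoid⟩
      have hwin : α ∈ ReachWin E R :=
        hs.1 α (Or.inr hlose) ⟨u, hF0, hu⟩ hfollows
      obtain ⟨m, x, hx, hxR, -, -⟩ := hwin
      exact havoid m x hx hxR
  · -- the play is infinite
    push_neg at hfin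
    have hall : ∀ k, F k ≠ none := by
      intro k
      cases k with
      | zero => rw [hF0]; simp
      | succ m => exact hfin m
    have havoid : ∀ k x, F k = some x → x ∉ R := by
      intro k x hx hxR
      exact hfin k (hnotR_before k x hx hxR)
    exact ⟨α, Or.inr ⟨Or.inl hall, havoid⟩, hF0, hfollows,
      fun m hm => absurd hm (hfin m)⟩
end
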